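/- Let n ∈ ℕ with n ≥ 1, and let G : ℝ → Matrix (Fin (n+1)) (Fin (n+1)) ℝ be a matrix-valued function each of whose entries is differentiable at 0, such that det (G 0) ≠ 0. Write 'last' for the last index of Fin (n+1). Assume: (i) G t last last = 1 for all t; (ii) G 0 last k = 0 for every k ≠ last; (iii) G 0 k last = 0 for every k ≠ last. Then the function t ↦ ((G t)⁻¹) last last is differentiable at 0 and its derivative at 0 is 0. -/

import Mathlib

private lemma diffAt_det_aux {m : Type*} [Fintype m] [DecidableEq m]
    (A : ℝ → Matrix m m ℝ) (h : ∀ i j, DifferentiableAt ℝ (fun t => A t i j) 0) :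
    DifferentiableAt ℝ (fun t => (A t).det) 0 := by
  simp only [Matrix.det_apply']
  exact DifferentiableAt.fun_sum fun σ _ =>
    ((DifferentiableAt.fun_finsetProd fun i _ => h (σ i) i)).const_mul _

/-- `∂ₜ g^{nn} = 0` on the boundary: under the boundary normalization of the metric tensor
(last diagonal entry `≡ 1`, off-diagonal last row/column vanishing at `t = 0`) and
invertibility at `t = 0`, the last diagonal entry of the inverse matrix `(G t)⁻¹` is
differentiable at `0` with derivative `0`. -/
theorem deriv_inv_last_last_eq_zero
    (n : ℕ) (hn : 1 ≤ n) (G : ℝ → Matrix (Fin (n + 1)) (Fin (n + 1)) ℝ)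
    (hG : ∀ i j, DifferentiableAt ℝ (fun t => G t i j) 0)
    (hdet : (G 0).det ≠ 0)
    (h1 : ∀ t, G t (Fin.last n) (Fin.last n) = 1)
    (h2 : ∀ k, k ≠ Fin.last n → G 0 (Fin.last n) k = 0)
    (h3 : ∀ k, k ≠ Fin.last n → G 0 k (Fin.last n) = 0) :
    DifferentiableAt ℝ (fun t => (G t)⁻¹ (Fin.last n) (Fin.last n)) 0 ∧
      deriv (fun t => (G t)⁻¹ (Fin.last n) (Fin.last n)) 0 = 0 := by
  classical
  set L := Fin.last n with hL
  set f : ℝ → ℝ := fun t => (G t).det with hf_def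
  set m : Fin (n + 1) → ℝ → ℝ :=
    fun j t => ((G t).submatrix L.succAbove j.succAbove).det with hm_def
  have hf : DifferentiableAt ℝ f 0 := diffAt_det_aux _ hG
  have hm : ∀ j, DifferentiableAt ℝ (m j) 0 :=
    fun j => diffAt_det_aux _ fun a b => hG _ _
  -- the minors with `j ≠ L` vanish at `0` (they contain the zero last column)
  have hm0 : ∀ j, j ≠ L → m j 0 = 0 := by
    intro j hj
    have hjn : (j : ℕ) < n := by
      have := j.isLt
      have : (j : ℕ) ≠ n := fun h => hj (Fin.ext h)
      omega
    set k : Fin n := ⟨n - 1, by omega⟩ with hk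
    have hsk : j.succAbove k = L := by
      rw [Fin.succAbove_of_le_castSucc]
      · ext; simp [hk, Fin.val_succ, hL]; omega
      · rw [Fin.le_castSucc_iff]
        simp only [Fin.lt_def, Fin.val_succ, hk]
        omega
    apply Matrix.det_eq_zero_of_column_eq_zero k
    intro i
    rw [Matrix.submatrix_apply, hsk]
    apply h3
    intro hcon
    have : (L.succAbove i : ℕ) = n := by rw [hcon]; simp [hL]
    have : (L.succAbove i : ℕ) = (i : ℕ) := by
      rw [Fin.succAbove_last]; simp
    omega
  -- Laplace expansion of `f` along the last row
  have hfeq : f = fun t =>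
      ∑ j : Fin (n + 1), (-1 : ℝ) ^ ((L : ℕ) + (j : ℕ)) * (G t L j * m j t) := by
    funext t
    rw [hf_def]
    simp only [Matrix.det_succ_row (G t) L, mul_assoc]
    rfl
  have hsign : ((-1 : ℝ)) ^ ((L : ℕ) + (L : ℕ)) = 1 := (Even.add_self _).neg_one_pow
  set g : ℝ → ℝ := m L with hg_def
  have hg : DifferentiableAt ℝ g 0 := hm L
  -- values agree at 0
  have hval : f 0 = g 0 := by
    rw [hfeq]
    show (∑ j : Fin (n + 1), (-1 : ℝ) ^ ((L : ℕ) + (j : ℕ)) * (G 0 L j * m j 0)) = g 0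
    rw [Finset.sum_eq_single L]
    · rw [hsign, h1, one_mul, one_mul]
    · intro j _ hj
      rw [h2 j hj, zero_mul, mul_zero]
    · simp
  -- derivatives agree at 0
  have hGLL : (fun t => G t L L) = fun _ => (1 : ℝ) := funext fun t => h1 t
  have hderiv : deriv f 0 = deriv g 0 := by
    have hdiffterm : ∀ j : Fin (n + 1),
        DifferentiableAt ℝ (fun t => (-1 : ℝ) ^ ((L : ℕ) + (j : ℕ)) * (G t L j * m j t)) 0 :=
      fun j => (((hG L j).mul (hm j)).const_mul _)
    rw [hfeq, deriv_fun_sum fun j _ => hdiffterm j]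
    rw [Finset.sum_eq_single L]
    · rw [deriv_const_mul _ ((hG L L).fun_mul (hm L)),
        deriv_fun_mul (hG L L) (hm L), hsign, one_mul, h1]
      have : deriv (fun t => G t L L) 0 = 0 := by rw [hGLL]; simp
      rw [this, zero_mul, one_mul, zero_add]
    · intro j _ hj
      rw [deriv_const_mul _ ((hG L j).fun_mul (hm j)), deriv_fun_mul (hG L j) (hm j),
        h2 j hj, hm0 j hj, mul_zero, zero_mul, add_zero, mul_zero]
    · simp
  -- eventually, the inverse entry equals `g / f`
  have hne : ∀ᶠ t in nhds (0 : ℝ), f t ≠ 0 :=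
    hf.continuousAt.eventually_ne hdet
  have hev : (fun t => (G t)⁻¹ L L) =ᶠ[nhds (0 : ℝ)] fun t => g t / f t := by
    filter_upwards [hne] with t ht
    rw [Matrix.inv_def, Matrix.smul_apply, Ring.inverse_eq_inv,
      Matrix.adjugate_fin_succ_eq_det_submatrix, hsign, one_mul]
    simp only [smul_eq_mul]
    rw [div_eq_inv_mul]
  have hdivdiff : DifferentiableAt ℝ (fun t => g t / f t) 0 := hg.div hf hdet
  constructor
  · exact hev.differentiableAt_iff.mpr hdivdiff
  · rw [hev.deriv_eq, deriv_fun_div hg hf hdet, hval, hderiv, mul_comm, sub_self, zero_div]
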